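/- arXiv:2602.22006 — 3 statements merged into one kernel-verified Lean document; each statement's English description precedes it below -/
import Mathlib

section
/- Let f have L-Lipschitz gradient and let iterates satisfy x^{k+1} = x^k + Δ^k, with the stale read satisfying ‖x^k − x̂^k‖ ≤ ∑_{d=k−ε}^{k−1} ‖Δ^d‖ for a delay bound ε. Then for any η > 0, ⟨∇f(x^k) − ∇f(x̂^k), Δ^k⟩ ≤ ∑_{i=k−ε}^{k−1} (L/(2η))‖Δⁱ‖² + (ε η L / 2)‖Δ^k‖². -/
/-! Cauchy–Schwarz and the Lipschitz bound reduce the inner product to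
`L ‖xᵏ - x̂ᵏ‖ ‖Δᵏ‖ ≤ ∑_d L ‖Δᵈ‖ ‖Δᵏ‖`, and Young's inequality with weight `η` splits each of the `ε`
cross terms of the delay window into `L/(2η) ‖Δᵈ‖² + ηL/2 ‖Δᵏ‖²`. -/

open Finset

lemma mul_le_sq_div_add_mul_sq {η : ℝ} (hη : 0 < η) (a b : ℝ) :
    a * b ≤ a ^ 2 / (2 * η) + η * b ^ 2 / 2 := by
  have hsq : 0 ≤ (a - η * b) ^ 2 / (2 * η) := by positivity
  have hexpand : (a - η * b) ^ 2 / (2 * η) = a ^ 2 / (2 * η) + η * b ^ 2 / 2 - a * b := by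
    field_simp
    ring
  linarith

lemma mul_sum_mul_le_sum_sq_add_card_mul_sq {ι : Type*} (s : Finset ι) {L η : ℝ}
    (hL : 0 ≤ L) (hη : 0 < η) (a : ι → ℝ) (b : ℝ) :
    L * (∑ i ∈ s, a i) * b ≤
      (∑ i ∈ s, L / (2 * η) * a i ^ 2) + #s * (η * L / 2) * b ^ 2 := calc
  L * (∑ i ∈ s, a i) * b = ∑ i ∈ s, L * (a i * b) := by
    rw [mul_assoc, sum_mul, mul_sum]
  _ ≤ ∑ i ∈ s, L * (a i ^ 2 / (2 * η) + η * b ^ 2 / 2) := by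
    gcongr with i
    exact mul_le_sq_div_add_mul_sq hη _ _
  _ = (∑ i ∈ s, L / (2 * η) * a i ^ 2) + #s * (η * L / 2) * b ^ 2 := by
    rw [mul_assoc (#s : ℝ), ← nsmul_eq_mul, ← sum_const, ← sum_add_distrib]
    exact sum_congr rfl fun i _ ↦ by ring

lemma Nat.card_Icc_sub_sub_one {ε k : ℕ} (hε : 1 ≤ ε) (hk : ε ≤ k) :
    #(Icc (k - ε) (k - 1)) = ε := by
  rw [Nat.card_Icc]
  omega

theorem delay_mismatch_bound_general (n : ℕ)
    (f' : EuclideanSpace ℝ (Fin n) → EuclideanSpace ℝ (Fin n)) (L : ℝ) (hL : 0 < L)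
    (hLip : ∀ x y, ‖f' x - f' y‖ ≤ L * ‖x - y‖)
    (x xhat Δ : ℕ → EuclideanSpace ℝ (Fin n)) (ε : ℕ) (hε : 1 ≤ ε)
    (hdelay : ∀ k, ‖x k - xhat k‖ ≤ ∑ d ∈ Finset.Icc (k - ε) (k - 1), ‖Δ d‖)
    (η : ℝ) (hη : 0 < η) (k : ℕ) (hk : ε ≤ k) :
    (inner ℝ (f' (x k) - f' (xhat k)) (Δ k) : ℝ) ≤
      (∑ i ∈ Finset.Icc (k - ε) (k - 1), (L / (2 * η)) * ‖Δ i‖ ^ 2) +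
        ((ε : ℝ) * η * L / 2) * ‖Δ k‖ ^ 2 := calc
  (inner ℝ (f' (x k) - f' (xhat k)) (Δ k) : ℝ) ≤ ‖f' (x k) - f' (xhat k)‖ * ‖Δ k‖ :=
    real_inner_le_norm _ _
  _ ≤ L * ‖x k - xhat k‖ * ‖Δ k‖ := by gcongr; exact hLip _ _
  _ ≤ L * (∑ d ∈ Icc (k - ε) (k - 1), ‖Δ d‖) * ‖Δ k‖ := by gcongr; exact hdelay k
  _ ≤ (∑ i ∈ Icc (k - ε) (k - 1), L / (2 * η) * ‖Δ i‖ ^ 2) +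
        #(Icc (k - ε) (k - 1)) * (η * L / 2) * ‖Δ k‖ ^ 2 :=
    mul_sum_mul_le_sum_sq_add_card_mul_sq _ hL.le hη _ _
  _ = _ := by rw [Nat.card_Icc_sub_sub_one hε hk]; ring

theorem delay_mismatch_bound (n : ℕ) (f : EuclideanSpace ℝ (Fin n) → ℝ)
    (f' : EuclideanSpace ℝ (Fin n) → EuclideanSpace ℝ (Fin n)) (L : ℝ) (hL : 0 < L)
    (hgrad : ∀ x, HasGradientAt f (f' x) x)
    (hLip : ∀ x y, ‖f' x - f' y‖ ≤ L * ‖x - y‖)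
    (x xhat Δ : ℕ → EuclideanSpace ℝ (Fin n)) (ε : ℕ) (hε : 1 ≤ ε)
    (hstep : ∀ k, x (k + 1) = x k + Δ k)
    (hdelay : ∀ k, ‖x k - xhat k‖ ≤ ∑ d ∈ Finset.Icc (k - ε) (k - 1), ‖Δ d‖)
    (η : ℝ) (hη : 0 < η) (k : ℕ) (hk : ε ≤ k) :
    (inner ℝ (f' (x k) - f' (xhat k)) (Δ k) : ℝ) ≤
      (∑ i ∈ Finset.Icc (k - ε) (k - 1), (L / (2 * η)) * ‖Δ i‖ ^ 2) +
        ((ε : ℝ) * η * L / 2) * ‖Δ k‖ ^ 2 :=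
  delay_mismatch_bound_general n f' L hL hLip x xhat Δ ε hε hdelay η hη k hk
end

section
/- (Knot insertion / Boehm's formula preserves the curve) Let p(t) = ∑_{j=0}^n B_{j,k}(t) p_j be a B-spline of order k on nondecreasing knots T, let u ∈ [t_j, t_{j+1}) be inserted to form T' = {t₀,…,t_j, u, t_{j+1},…,t_{n+k}}, and define new control points Q_i = α_i p_i + (1−α_i) p_{i−1} where α_i = 1 for i ≤ j−k+1, α_i = (u − t_i)/(t_{i+k−1} − t_i) for j−k+2 ≤ i ≤ j, and α_i = 0 for i ≥ j+1. Then ∑_i B'_{i,k}(t) Q_i = p(t) for all t in the common domain, where B'_{i,k} are the basis functions on T'. -/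
/-- Cox–de Boor B-spline basis functions of order `k` (order 0 is set to 0),
with the convention that division by zero yields zero (Lean's default). -/
noncomputable def coxDeBoor (T : ℕ → ℝ) : ℕ → ℕ → ℝ → ℝ
  | _, 0, _ => 0
  | i, 1, t => if T i ≤ t ∧ t < T (i + 1) then 1 else 0
  | i, j + 2, t =>
      (t - T i) / (T (i + j + 1) - T i) * coxDeBoor T i (j + 1) t +
        (T (i + j + 2) - t) / (T (i + j + 2) - T (i + 1)) * coxDeBoor T (i + 1) (j + 1) t

theorem cdb_congr : ∀ (k : ℕ) (T₁ T₂ : ℕ → ℝ) (i₁ i₂ : ℕ),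
    (∀ l, l ≤ k → T₁ (i₁ + l) = T₂ (i₂ + l)) → ∀ t, coxDeBoor T₁ i₁ k t = coxDeBoor T₂ i₂ k t
  | 0, _, _, _, _, _, _ => by simp [coxDeBoor]
  | 1, T₁, T₂, i₁, i₂, h, t => by
      have h0 := h 0 (by omega); have h1 := h 1 (by omega)
      simp only [Nat.add_zero] at h0
      rw [coxDeBoor, coxDeBoor, h0, h1]
  | (k+2), T₁, T₂, i₁, i₂, h, t => by
      have e1 := cdb_congr (k+1) T₁ T₂ i₁ i₂ (fun l hl => h l (by omega)) t
      have e2 := cdb_congr (k+1) T₁ T₂ (i₁+1) (i₂+1)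
        (fun l hl => by
          have := h (1 + l) (by omega)
          rwa [← Nat.add_assoc, ← Nat.add_assoc] at this) t
      have h0 := h 0 (by omega); have h1 := h 1 (by omega)
      have hk1 := h (k+1) (by omega); have hk2 := h (k+2) (by omega)
      simp only [Nat.add_zero] at h0
      rw [coxDeBoor, coxDeBoor, e1, e2, h0, h1]
      simp only [Nat.add_assoc]
      rw [hk1, hk2]

theorem cdb_zero : ∀ (k : ℕ) (T : ℕ → ℝ), Monotone T → ∀ (i : ℕ), T i = T (i + k) → ∀ t, coxDeBoor T i k t = 0
  | 0, _, _, _, _, _ => by simp [coxDeBoor]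
  | 1, T, hT, i, h, t => by
      rw [coxDeBoor, if_neg]; rintro ⟨h1, h2⟩; rw [← h] at h2; linarith
  | (k+2), T, hT, i, h, t => by
      have l1 : T i = T (i + (k+1)) :=
        le_antisymm (hT (by omega)) (h ▸ hT (by omega))
      have l2 : T (i+1) = T ((i+1) + (k+1)) := by
        refine le_antisymm (hT (by omega)) ?_
        have h2 : T (i + (k + 2)) ≤ T (i + 1) := h ▸ hT (by omega)
        have e : (i+1) + (k+1) = i + (k+2) := by omega
        rw [e]; exact h2
      rw [coxDeBoor, cdb_zero (k+1) T hT i l1 t, cdb_zero (k+1) T hT (i+1) l2 t]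
      ring

noncomputable def ains (T : ℕ → ℝ) (u : ℝ) (j m i : ℕ) : ℝ :=
  if i + m ≤ j + 1 then 1 else if i ≤ j then (u - T i) / (T (i + m - 1) - T i) else 0

section
variable (T : ℕ → ℝ) (hT : Monotone T) (j : ℕ) (u : ℝ)
  (hu1 : T j ≤ u) (hu2 : u < T (j + 1)) (T' : ℕ → ℝ)
  (hT' : ∀ m, T' m = if m ≤ j then T m else if m = j + 1 then u else T (m - 1))

include hT' in
theorem T'_lo : ∀ m, m ≤ j → T' m = T m := by
  intro m hm; rw [hT' m, if_pos hm]

include hT' in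
theorem T'_mid : T' (j+1) = u := by
  rw [hT' (j+1), if_neg (by omega), if_pos rfl]

include hT' in
theorem T'_hi : ∀ m, j + 2 ≤ m → T' m = T (m-1) := by
  intro m hm; rw [hT' m, if_neg (by omega), if_neg (by omega)]

include hT hu1 hu2 hT' in
theorem T'_mono : Monotone T' := by
  apply monotone_nat_of_le_succ
  intro m
  rcases lt_trichotomy m j with hm | hm | hm
  · rw [T'_lo T j u T' hT' m (by omega), T'_lo T j u T' hT' (m+1) (by omega)]
    exact hT (by omega)
  · rw [T'_lo T j u T' hT' m (by omega), hm, T'_mid T j u T' hT']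
    exact hu1
  · rcases Nat.eq_or_lt_of_le hm with hm' | hm'
    · rw [← hm', T'_mid T j u T' hT', T'_hi T j u T' hT' (j+1+1) (by omega)]
      simpa using hu2.le
    · rw [T'_hi T j u T' hT' m (by omega), T'_hi T j u T' hT' (m+1) (by omega)]
      exact hT (by omega)

include hT hu1 hu2 hT' in
theorem key : ∀ m i t, coxDeBoor T i (m + 1) t =
    ains T u j (m + 1) i * coxDeBoor T' i (m + 1) t +
      (1 - ains T u j (m + 1) (i + 1)) * coxDeBoor T' (i + 1) (m + 1) t := by
  have hlo := T'_lo T j u T' hT'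
  have hmid := T'_mid T j u T' hT'
  have hhi := T'_hi T j u T' hT'
  have hmono := T'_mono T hT j u hu1 hu2 T' hT'
  intro m
  induction m with
  | zero =>
    intro i t
    have hA : ains T u j 1 i = if i ≤ j then 1 else 0 := by
      unfold ains
      by_cases h : i ≤ j
      · rw [if_pos (by omega), if_pos h]
      · rw [if_neg (by omega), if_neg h, if_neg h]
    have hA' : ains T u j 1 (i+1) = if i + 1 ≤ j then 1 else 0 := by
      unfold ains
      by_cases h : i + 1 ≤ j
      · rw [if_pos (by omega), if_pos h]
      · rw [if_neg (by omega), if_neg h, if_neg h]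
    rw [hA, hA']
    rcases lt_trichotomy i j with hij | hij | hij
    · rw [if_pos (by omega), if_pos (by omega)]
      have hc := cdb_congr 1 T T' i i (fun l hl => by rw [hlo (i+l) (by omega)]) t
      rw [hc]; ring
    · rw [if_pos (by omega), if_neg (by omega)]
      subst hij
      rw [coxDeBoor, coxDeBoor, coxDeBoor, hlo i le_rfl, hmid,
        hhi (i+1+1) (by omega)]
      have e : i + 1 + 1 - 1 = i + 1 := by omega
      rw [e]
      by_cases hb : T i ≤ t ∧ t < T (i + 1)
      · rw [if_pos hb]
        rcases lt_or_ge t u with h | h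
        · rw [if_pos ⟨hb.1, h⟩,
            if_neg (show ¬(u ≤ t ∧ t < T (i + 1)) by rintro ⟨h1, -⟩; linarith)]
          ring
        · rw [if_neg (show ¬(T i ≤ t ∧ t < u) by rintro ⟨-, h2⟩; linarith),
            if_pos ⟨h, hb.2⟩]
          ring
      · rw [if_neg hb,
          if_neg (show ¬(T i ≤ t ∧ t < u) by
            rintro ⟨h1, h2⟩; exact hb ⟨h1, by linarith⟩),
          if_neg (show ¬(u ≤ t ∧ t < T (i + 1)) by
            rintro ⟨h1, h2⟩; exact hb ⟨by linarith, h2⟩)]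
        ring
    · rw [if_neg (by omega), if_neg (by omega)]
      have hc := cdb_congr 1 T T' i (i+1)
        (fun l hl => by rw [hhi (i+1+l) (by omega)]; congr 1 <;> omega) t
      rw [hc]; ring
  | succ m ih =>
    intro i t
    simp only [show m + 1 + 1 = m + 2 by omega]
    by_cases hL : i + m + 2 ≤ j
    · have ha : ains T u j (m+2) i = 1 := by unfold ains; rw [if_pos (by omega)]
      have hb : ains T u j (m+2) (i+1) = 1 := by unfold ains; rw [if_pos (by omega)]
      have hc := cdb_congr (m+2) T' T i i (fun l hl => by rw [hlo (i+l) (by omega)]) t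
      rw [ha, hb, hc]; ring
    · by_cases hR : j + 1 ≤ i
      · have ha : ains T u j (m+2) i = 0 := by
          unfold ains; rw [if_neg (by omega), if_neg (by omega)]
        have hb : ains T u j (m+2) (i+1) = 0 := by
          unfold ains; rw [if_neg (by omega), if_neg (by omega)]
        have hc := cdb_congr (m+2) T T' i (i+1)
          (fun l hl => by rw [hhi (i+1+l) (by omega)]; congr 1 <;> omega) t
        rw [ha, hb, hc]; ring
      · -- middle zone : i ≤ j ≤ i + m + 1
        have hij : i ≤ j := by omega
        have hji : j ≤ i + m + 1 := by omega
        simp only [coxDeBoor]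
        rw [ih i t, ih (i+1) t]
        simp only [show i + 1 + 1 = i + 2 by omega, show i + 1 + m + 1 = i + m + 2 by omega,
          show i + 1 + m + 2 = i + m + 3 by omega]
        have h1 : (t - T i) / (T (i+m+1) - T i) * ains T u j (m+1) i * coxDeBoor T' i (m+1) t
            = ains T u j (m+2) i * ((t - T' i) / (T' (i+m+1) - T' i)) * coxDeBoor T' i (m+1) t := by
          by_cases hdA : T' i = T' (i+m+1)
          · rw [cdb_zero (m+1) T' hmono i
              (show T' i = T' (i+(m+1)) by rw [show i+(m+1) = i+m+1 by omega]; exact hdA) t]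
            ring
          · have hTi' : T' i = T i := hlo i hij
            by_cases hc1 : j = i+m+1
            · have ha : ains T u j (m+2) i = 1 := by unfold ains; rw [if_pos (by omega)]
              have haI : ains T u j (m+1) i = 1 := by unfold ains; rw [if_pos (by omega)]
              rw [ha, haI, hTi', hlo (i+m+1) (by omega)]
              ring
            · by_cases hc2 : j = i+m
              · have ha : ains T u j (m+2) i = (u - T i) / (T (i+m+1) - T i) := by
                  unfold ains; rw [if_neg (by omega), if_pos hij]
                  simp only [show i + (m+2) - 1 = i + m + 1 by omega]
                have haI : ains T u j (m+1) i = 1 := by unfold ains; rw [if_pos (by omega)]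
                have hM : T' (i+m+1) = u := by rw [show i+m+1 = j+1 by omega, hmid]
                have hune : u - T i ≠ 0 := by
                  intro h0
                  exact hdA (by rw [hTi', hM]; exact (sub_eq_zero.mp h0).symm)
                have hDne : T (i+m+1) - T i ≠ 0 := by
                  have ha1 : T i ≤ u := le_trans (hT hij) hu1
                  have ha2 : u < T (i+m+1) := by
                    have := hu2; rw [show j+1 = i+m+1 by omega] at this; exact this
                  intro h0; have := sub_eq_zero.mp h0; linarith
                rw [ha, haI, hTi', hM]
                field_simp
              · have ha : ains T u j (m+2) i = (u - T i) / (T (i+m+1) - T i) := by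
                  unfold ains; rw [if_neg (by omega), if_pos hij]
                  simp only [show i + (m+2) - 1 = i + m + 1 by omega]
                have haI : ains T u j (m+1) i = (u - T i) / (T (i+m) - T i) := by
                  unfold ains; rw [if_neg (by omega), if_pos hij]
                  simp only [show i + (m+1) - 1 = i + m by omega]
                have hM : T' (i+m+1) = T (i+m) := by
                  rw [hhi (i+m+1) (by omega)]; congr 1 <;> omega
                rw [ha, haI, hTi', hM]; ring
        have h3 : (T (i+m+2) - t) / (T (i+m+2) - T (i+1)) * (1 - ains T u j (m+1) (i+2))
            = (1 - ains T u j (m+2) (i+1)) * ((T' (i+m+3) - t) / (T' (i+m+3) - T' (i+2))) := by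
          have h3' : T' (i+m+3) = T (i+m+2) := by rw [hhi (i+m+3) (by omega)]; congr 1 <;> omega
          by_cases hd1 : i = j
          · have hb : ains T u j (m+2) (i+1) = 0 := by
              unfold ains; rw [if_neg (by omega), if_neg (by omega)]
            have hcI : ains T u j (m+1) (i+2) = 0 := by
              unfold ains; rw [if_neg (by omega), if_neg (by omega)]
            have h2' : T' (i+2) = T (i+1) := by rw [hhi (i+2) (by omega)]; congr 1 <;> omega
            rw [hb, hcI, h2', h3']; ring
          · by_cases hd2 : i + 1 = j
            · have hb : ains T u j (m+2) (i+1) = (u - T (i+1)) / (T (i+m+2) - T (i+1)) := by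
                unfold ains; rw [if_neg (by omega), if_pos (by omega)]
                simp only [show i + 1 + (m+2) - 1 = i + m + 2 by omega]
              have hcI : ains T u j (m+1) (i+2) = 0 := by
                unfold ains; rw [if_neg (by omega), if_neg (by omega)]
              have h2' : T' (i+2) = u := by rw [show i+2 = j+1 by omega, hmid]
              have hF : T (i+1) < T (i+m+2) := by
                have ha1 : T (i+1) ≤ u := le_trans (hT (by omega)) hu1
                have ha2 : u < T (i+m+2) := lt_of_lt_of_le hu2 (hT (by omega))
                linarith
              have hE : u < T (i+m+2) := lt_of_lt_of_le hu2 (hT (by omega))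
              rw [hb, hcI, h2', h3']
              have hFne : T (i+m+2) - T (i+1) ≠ 0 := sub_ne_zero.mpr hF.ne'
              have hEne : T (i+m+2) - u ≠ 0 := sub_ne_zero.mpr hE.ne'
              field_simp
              ring
            · have hd3 : i + 2 ≤ j := by omega
              have hb : ains T u j (m+2) (i+1) = (u - T (i+1)) / (T (i+m+2) - T (i+1)) := by
                unfold ains; rw [if_neg (by omega), if_pos (by omega)]
                simp only [show i + 1 + (m+2) - 1 = i + m + 2 by omega]
              have hcI : ains T u j (m+1) (i+2) = (u - T (i+2)) / (T (i+m+2) - T (i+2)) := by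
                unfold ains; rw [if_neg (by omega), if_pos (by omega)]
                simp only [show i + 2 + (m+1) - 1 = i + m + 2 by omega]
              have h2' : T' (i+2) = T (i+2) := hlo (i+2) (by omega)
              have hF : T (i+1) < T (i+m+2) := by
                have ha1 : T (i+1) ≤ u := le_trans (hT (by omega)) hu1
                have ha2 : u < T (i+m+2) := lt_of_lt_of_le hu2 (hT (by omega))
                linarith
              have hG : T (i+2) < T (i+m+2) := by
                have ha1 : T (i+2) ≤ u := le_trans (hT (by omega)) hu1
                have ha2 : u < T (i+m+2) := lt_of_lt_of_le hu2 (hT (by omega))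
                linarith
              rw [hb, hcI, h2', h3']
              have hFne : T (i+m+2) - T (i+1) ≠ 0 := sub_ne_zero.mpr hF.ne'
              have hGne : T (i+m+2) - T (i+2) ≠ 0 := sub_ne_zero.mpr hG.ne'
              field_simp
              ring
        have h2 : ((t - T i) / (T (i+m+1) - T i) * (1 - ains T u j (m+1) (i+1))
              + (T (i+m+2) - t) / (T (i+m+2) - T (i+1)) * ains T u j (m+1) (i+1))
              * coxDeBoor T' (i+1) (m+1) t
            = (ains T u j (m+2) i * ((T' (i+m+2) - t) / (T' (i+m+2) - T' (i+1)))
              + (1 - ains T u j (m+2) (i+1)) * ((t - T' (i+1)) / (T' (i+m+2) - T' (i+1))))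
              * coxDeBoor T' (i+1) (m+1) t := by
          by_cases hdB : T' (i+1) = T' (i+m+2)
          · rw [cdb_zero (m+1) T' hmono (i+1)
              (show T' (i+1) = T' (i+1+(m+1)) by
                rw [show i+1+(m+1) = i+m+2 by omega]; exact hdB) t]
            ring
          · by_cases hd1 : i = j
            · have ha : ains T u j (m+2) i = (u - T i) / (T (i+m+1) - T i) := by
                unfold ains; rw [if_neg (by omega), if_pos hij]
                simp only [show i + (m+2) - 1 = i + m + 1 by omega]
              have hb : ains T u j (m+2) (i+1) = 0 := by
                unfold ains; rw [if_neg (by omega), if_neg (by omega)]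
              have hbI : ains T u j (m+1) (i+1) = 0 := by
                unfold ains; rw [if_neg (by omega), if_neg (by omega)]
              have h1' : T' (i+1) = u := by rw [show i+1 = j+1 by omega, hmid]
              have h2' : T' (i+m+2) = T (i+m+1) := by rw [hhi (i+m+2) (by omega)]; congr 1 <;> omega
              have hD : T i < T (i+m+1) := by
                have ha1 : T i ≤ u := le_trans (hT hij) hu1
                have ha2 : u < T (i+m+1) := lt_of_lt_of_le hu2 (hT (by omega))
                linarith
              have hE : u < T (i+m+1) := lt_of_lt_of_le hu2 (hT (by omega))
              rw [ha, hb, hbI, h1', h2']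
              have hDne : T (i+m+1) - T i ≠ 0 := sub_ne_zero.mpr hD.ne'
              have hEne : T (i+m+1) - u ≠ 0 := sub_ne_zero.mpr hE.ne'
              field_simp
              ring
            · by_cases hd2 : j = i+m+1
              · have ha : ains T u j (m+2) i = 1 := by unfold ains; rw [if_pos (by omega)]
                have hb : ains T u j (m+2) (i+1) = (u - T (i+1)) / (T (i+m+2) - T (i+1)) := by
                  unfold ains; rw [if_neg (by omega), if_pos (by omega)]
                  simp only [show i + 1 + (m+2) - 1 = i + m + 2 by omega]
                have hbI : ains T u j (m+1) (i+1) = 1 := by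
                  unfold ains; rw [if_pos (by omega)]
                have h1' : T' (i+1) = T (i+1) := hlo (i+1) (by omega)
                have h2' : T' (i+m+2) = u := by rw [show i+m+2 = j+1 by omega, hmid]
                have hGne : u - T (i+1) ≠ 0 := by
                  intro h0
                  exact hdB (by rw [h1', h2']; exact (sub_eq_zero.mp h0).symm)
                have hF : T (i+1) < T (i+m+2) := by
                  have ha1 : T (i+1) ≤ u := le_trans (hT (by omega)) hu1
                  have ha2 : u < T (i+m+2) := by
                    have := hu2; rw [show j+1 = i+m+2 by omega] at this; exact this
                  linarith
                rw [ha, hb, hbI, h1', h2']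
                have hFne : T (i+m+2) - T (i+1) ≠ 0 := sub_ne_zero.mpr hF.ne'
                field_simp
                ring
              · have hd3 : i + 1 ≤ j := by omega
                have hd4 : j ≤ i + m := by omega
                have ha : ains T u j (m+2) i = (u - T i) / (T (i+m+1) - T i) := by
                  unfold ains; rw [if_neg (by omega), if_pos hij]
                  simp only [show i + (m+2) - 1 = i + m + 1 by omega]
                have hb : ains T u j (m+2) (i+1) = (u - T (i+1)) / (T (i+m+2) - T (i+1)) := by
                  unfold ains; rw [if_neg (by omega), if_pos (by omega)]
                  simp only [show i + 1 + (m+2) - 1 = i + m + 2 by omega]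
                have hbI : ains T u j (m+1) (i+1) = (u - T (i+1)) / (T (i+m+1) - T (i+1)) := by
                  unfold ains; rw [if_neg (by omega), if_pos (by omega)]
                  simp only [show i + 1 + (m+1) - 1 = i + m + 1 by omega]
                have h1' : T' (i+1) = T (i+1) := hlo (i+1) (by omega)
                have h2' : T' (i+m+2) = T (i+m+1) := by rw [hhi (i+m+2) (by omega)]; congr 1 <;> omega
                have hHne : T (i+m+1) - T (i+1) ≠ 0 := by
                  intro h0
                  exact hdB (by rw [h1', h2']; exact (sub_eq_zero.mp h0).symm)
                have hD : T i < T (i+m+1) := by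
                  have ha1 : T i ≤ u := le_trans (hT hij) hu1
                  have ha2 : u < T (i+m+1) := lt_of_lt_of_le hu2 (hT (by omega))
                  linarith
                have hF : T (i+1) < T (i+m+2) := by
                  have ha1 : T (i+1) ≤ u := le_trans (hT (by omega)) hu1
                  have ha2 : u < T (i+m+2) := lt_of_lt_of_le hu2 (hT (by omega))
                  linarith
                rw [ha, hb, hbI, h1', h2']
                have hDne : T (i+m+1) - T i ≠ 0 := sub_ne_zero.mpr hD.ne'
                have hFne : T (i+m+2) - T (i+1) ≠ 0 := sub_ne_zero.mpr hF.ne'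
                congr 1
                field_simp
                ring
        linear_combination h1 + h2 + h3 * coxDeBoor T' (i+2) (m+1) t
end

/-- Knot insertion (Boehm's formula) preserves the B-spline curve. -/
theorem knot_insertion_preserves_curve (T : ℕ → ℝ) (hT : Monotone T)
    (n k j d : ℕ) (hk : 1 ≤ k) (hjl : k - 1 ≤ j) (hjn : j ≤ n)
    (u : ℝ) (hu1 : T j ≤ u) (hu2 : u < T (j + 1))
    (T' : ℕ → ℝ)
    (hT' : ∀ m, T' m = if m ≤ j then T m else if m = j + 1 then u else T (m - 1))
    (p : ℕ → EuclideanSpace ℝ (Fin d))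
    (α : ℕ → ℝ)
    (hα : ∀ i, α i = if i + k ≤ j + 1 then 1
      else if i ≤ j then (u - T i) / (T (i + k - 1) - T i) else 0)
    (Q : ℕ → EuclideanSpace ℝ (Fin d))
    (hQ : ∀ i, Q i = α i • p i + (1 - α i) • p (i - 1))
    (t : ℝ) (ht1 : T (k - 1) ≤ t) (ht2 : t < T (n + 1)) :
    (∑ i ∈ Finset.range (n + 2), coxDeBoor T' i k t • Q i) =
      (∑ i ∈ Finset.range (n + 1), coxDeBoor T i k t • p i) := by
  obtain ⟨m, rfl⟩ : ∃ m, k = m + 1 := ⟨k - 1, by omega⟩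
  have hkey := key T hT j u hu1 hu2 T' hT' m
  have hαains : ∀ i, α i = ains T u j (m + 1) i := by
    intro i; rw [hα i]; rfl
  have hα0 : α (n + 1) = 0 := by
    rw [hα]; rw [if_neg (by omega), if_neg (by omega)]
  have hα1 : α 0 = 1 := by
    rw [hα]; rw [if_pos (by omega)]
  simp only [hQ, smul_add, show n + 2 = n + 1 + 1 by omega]
  rw [Finset.sum_add_distrib]
  have S1 : (∑ i ∈ Finset.range (n + 1 + 1), coxDeBoor T' i (m + 1) t • (α i • p i))
      = ∑ i ∈ Finset.range (n + 1), coxDeBoor T' i (m + 1) t • (α i • p i) := by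
    rw [Finset.sum_range_succ, hα0]
    simp
  have S2 : (∑ i ∈ Finset.range (n + 1 + 1), coxDeBoor T' i (m + 1) t • ((1 - α i) • p (i - 1)))
      = ∑ i ∈ Finset.range (n + 1), coxDeBoor T' (i + 1) (m + 1) t • ((1 - α (i + 1)) • p i) := by
    rw [Finset.sum_range_succ', hα1]
    simp
  rw [S1, S2, ← Finset.sum_add_distrib]
  refine Finset.sum_congr rfl fun i _ => ?_
  rw [hkey i t, ← hαains i, ← hαains (i + 1)]
  module
end

section
/- Let f : ℝⁿ → ℝ have L-Lipschitz gradient and suppose a sequence x^{k+1} = x^k + Δ^k with delayed reads x̂^k satisfying ‖x^k − x̂^k‖ ≤ ∑_{i=k−ε}^{k−1}‖Δⁱ‖, and suppose the LM steps satisfy ‖∇f(x̂^k)‖ ≤ (λ + S²)‖Δ^k‖ for constants λ, S > 0. If ∑_{k=0}^∞ ‖Δ^k‖² < ∞, then ‖∇f(x^k)‖ → 0 as k → ∞. -/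
open Filter

theorem abcd_vanishing_gradient (n : ℕ) (f : EuclideanSpace ℝ (Fin n) → ℝ)
    (f' : EuclideanSpace ℝ (Fin n) → EuclideanSpace ℝ (Fin n)) (L : ℝ) (hL : 0 < L)
    (hgrad : ∀ x, HasGradientAt f (f' x) x)
    (hLip : ∀ x y, ‖f' x - f' y‖ ≤ L * ‖x - y‖)
    (x xhat Δ : ℕ → EuclideanSpace ℝ (Fin n)) (ε : ℕ) (hε : 1 ≤ ε)
    (hstep : ∀ k, x (k + 1) = x k + Δ k)
    (hdelay : ∀ k, ‖x k - xhat k‖ ≤ ∑ i ∈ Finset.Icc (k - ε) (k - 1), ‖Δ i‖)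
    (l S : ℝ) (hl : 0 < l) (hS : 0 < S)
    (hlm : ∀ k, ‖f' (xhat k)‖ ≤ (l + S ^ 2) * ‖Δ k‖)
    (hsum : Summable (fun k => ‖Δ k‖ ^ 2)) :
    Tendsto (fun k => ‖f' (x k)‖) atTop (nhds 0) := by
  have hΔ2 : Tendsto (fun k => ‖Δ k‖ ^ 2) atTop (nhds 0) := hsum.tendsto_atTop_zero
  have hΔ : Tendsto (fun k => ‖Δ k‖) atTop (nhds 0) := by
    have h := (Real.continuous_sqrt.tendsto 0).comp hΔ2
    rw [Real.sqrt_zero] at h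
    refine h.congr fun k => ?_
    simp [Function.comp, Real.sqrt_sq (norm_nonneg _)]
  -- the windowed sum tends to 0
  have hwin : Tendsto (fun k => ∑ i ∈ Finset.Icc (k - ε) (k - 1), ‖Δ i‖) atTop (nhds 0) := by
    rw [Metric.tendsto_atTop]
    intro δ hδ
    have hδ' : 0 < δ / (ε + 1) := by positivity
    obtain ⟨N, hN⟩ := (Metric.tendsto_atTop.mp hΔ) (δ / (ε + 1)) hδ'
    refine ⟨N + ε, fun k hk => ?_⟩
    have hsum_le : ∑ i ∈ Finset.Icc (k - ε) (k - 1), ‖Δ i‖ ≤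
        (Finset.Icc (k - ε) (k - 1)).card * (δ / (ε + 1)) := by
      have := Finset.sum_le_card_nsmul (Finset.Icc (k - ε) (k - 1)) (fun i => ‖Δ i‖) (δ / (ε + 1)) ?_
      · simpa [nsmul_eq_mul] using this
      intro i hi
      have hi1 := (Finset.mem_Icc.mp hi).1
      have hiN : N ≤ i := le_trans (by omega) hi1
      have := hN i hiN
      rw [Real.dist_eq, sub_zero, abs_of_nonneg (norm_nonneg _)] at this
      exact this.le
    have hcard : (Finset.Icc (k - ε) (k - 1)).card ≤ ε := by
      rw [Nat.card_Icc]; omega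
    have hle : ∑ i ∈ Finset.Icc (k - ε) (k - 1), ‖Δ i‖ ≤ (ε : ℝ) * (δ / (ε + 1)) := by
      refine hsum_le.trans ?_
      apply mul_le_mul_of_nonneg_right _ hδ'.le
      exact_mod_cast hcard
    have hnonneg : 0 ≤ ∑ i ∈ Finset.Icc (k - ε) (k - 1), ‖Δ i‖ :=
      Finset.sum_nonneg fun i _ => norm_nonneg _
    rw [Real.dist_eq, sub_zero, abs_of_nonneg hnonneg]
    calc ∑ i ∈ Finset.Icc (k - ε) (k - 1), ‖Δ i‖ ≤ (ε : ℝ) * (δ / (ε + 1)) := hle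
      _ < δ := by
        have : (ε : ℝ) / (ε + 1) < 1 := by
          rw [div_lt_one (by positivity)]; linarith
        calc (ε : ℝ) * (δ / (ε + 1)) = ((ε : ℝ) / (ε + 1)) * δ := by ring
          _ < 1 * δ := by exact mul_lt_mul_of_pos_right this hδ
          _ = δ := one_mul δ
  -- main bound
  have hbound : ∀ k, ‖f' (x k)‖ ≤
      L * (∑ i ∈ Finset.Icc (k - ε) (k - 1), ‖Δ i‖) + (l + S ^ 2) * ‖Δ k‖ := by
    intro k
    calc ‖f' (x k)‖ ≤ ‖f' (x k) - f' (xhat k)‖ + ‖f' (xhat k)‖ := by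
          simpa using norm_add_le (f' (x k) - f' (xhat k)) (f' (xhat k))
      _ ≤ L * ‖x k - xhat k‖ + (l + S ^ 2) * ‖Δ k‖ := add_le_add (hLip _ _) (hlm k)
      _ ≤ L * (∑ i ∈ Finset.Icc (k - ε) (k - 1), ‖Δ i‖) + (l + S ^ 2) * ‖Δ k‖ := by
          gcongr
          exact hdelay k
  have hlim : Tendsto (fun k => L * (∑ i ∈ Finset.Icc (k - ε) (k - 1), ‖Δ i‖)
      + (l + S ^ 2) * ‖Δ k‖) atTop (nhds 0) := by
    have := (hwin.const_mul L).add (hΔ.const_mul (l + S ^ 2))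
    simpa using this
  exact squeeze_zero (fun k => norm_nonneg _) hbound hlim
end
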